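/- Let φ(t) = t³(t−1) and ψ(t) = 2t^{−2} + t^{−3}. Then the map ξ = (φ, ψ) : ℂ* → ℂ² is injective and ξ'(t) ≠ 0 for all t ∈ ℂ*, i.e. ξ is a smooth embedding of ℂ* into ℂ². -/

import Mathlib

/-! Clearing denominators, `ψ(a) = ψ(b)` reads `(2a + 1) b³ = (2b + 1) a³`, and subtracting this
from `φ(a) = φ(b)` leaves `(a - b)(a + b)³ = 0`. The branch `b = -a` is excluded because
`φ(-a) - φ(a) = 2a³`. Likewise `ψ'(t) = -(4t + 3)/t⁴` vanishes only at `t = -3/4`, where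
`φ'(t) = 4t³ - 3t² = -27/8`. -/

/-- First coordinate of the seed of series (i): `φ(t) = t³(t−1)`. -/
noncomputable def phiI : ℂ → ℂ := fun t => t ^ 3 * (t - 1)

/-- Second coordinate: `ψ(t) = 2t⁻² + t⁻³`. -/
noncomputable def psiI : ℂ → ℂ := fun t => 2 * t ^ (-2 : ℤ) + t ^ (-3 : ℤ)

lemma hasDerivAt_phiI (t : ℂ) : HasDerivAt phiI (4 * t ^ 3 - 3 * t ^ 2) t :=
  ((hasDerivAt_pow 3 t).fun_mul ((hasDerivAt_id' t).sub_const 1)).congr_deriv (by ring)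

lemma phiI_neg (a : ℂ) : phiI (-a) = phiI a + 2 * a ^ 3 := by
  simp only [phiI]
  ring

lemma phiI_sub_phiI (a b : ℂ) :
    phiI a - phiI b = (a - b) * (a + b) ^ 3 + ((2 * a + 1) * b ^ 3 - (2 * b + 1) * a ^ 3) := by
  simp only [phiI]
  ring

lemma psiI_eq_div (t : ℂ) : psiI t = (2 * t + 1) / t ^ 3 := by
  rcases eq_or_ne t 0 with rfl | ht
  · simp [psiI]
  · simp only [psiI, zpow_neg, zpow_ofNat]
    field_simp

lemma psiI_eq_psiI_iff {a b : ℂ} (ha : a ≠ 0) (hb : b ≠ 0) :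
    psiI a = psiI b ↔ (2 * a + 1) * b ^ 3 = (2 * b + 1) * a ^ 3 := by
  rw [psiI_eq_div, psiI_eq_div, div_eq_div_iff (pow_ne_zero 3 ha) (pow_ne_zero 3 hb)]

lemma hasDerivAt_psiI {t : ℂ} (ht : t ≠ 0) : HasDerivAt psiI (-(4 * t + 3) / t ^ 4) t := by
  rw [show psiI = fun t => (2 * t + 1) / t ^ 3 from funext psiI_eq_div]
  refine ((((hasDerivAt_id' t).const_mul 2).add_const 1).fun_div (hasDerivAt_pow 3 t)
    (pow_ne_zero 3 ht)).congr_deriv ?_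
  field_simp
  ring

lemma eq_of_phiI_eq_of_psiI_eq {a b : ℂ} (ha : a ≠ 0) (hb : b ≠ 0)
    (hφ : phiI a = phiI b) (hψ : psiI a = psiI b) : a = b := by
  have hcross := (psiI_eq_psiI_iff ha hb).1 hψ
  have hprod : (a - b) * (a + b) ^ 3 = 0 := by
    linear_combination hφ - hcross - phiI_sub_phiI a b
  rcases mul_eq_zero.1 hprod with hsub | hsum
  · exact sub_eq_zero.1 hsub
  · have hba : b = -a := by linear_combination pow_eq_zero_iff three_ne_zero |>.1 hsum
    subst hba
    have hcube : a ^ 3 = 0 := by linear_combination (-1 / 2 : ℂ) * (hφ + phiI_neg a)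
    exact absurd (pow_eq_zero_iff three_ne_zero |>.1 hcube) ha

/-- The map `ξ(t) = (t³(t−1), 2t⁻² + t⁻³)` is injective on `ℂ*` and has
nonvanishing derivative there, i.e. it is a smooth embedding of `ℂ*` into `ℂ²`. -/
theorem series_i_seed_smooth_embedding :
    Set.InjOn (fun t : ℂ => (phiI t, psiI t)) {t : ℂ | t ≠ 0} ∧
    ∀ t : ℂ, t ≠ 0 → ¬(deriv phiI t = 0 ∧ deriv psiI t = 0) := by
  refine ⟨fun a ha b hb hab => ?_, fun t ht ⟨hφ', hψ'⟩ => ?_⟩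
  · obtain ⟨hφ, hψ⟩ := Prod.mk.inj hab
    exact eq_of_phiI_eq_of_psiI_eq ha hb hφ hψ
  · rw [(hasDerivAt_psiI ht).deriv, div_eq_zero_iff, neg_eq_zero] at hψ'
    have ht' : t = -3 / 4 := by
      linear_combination hψ'.resolve_right (pow_ne_zero 4 ht) / 4
    rw [(hasDerivAt_phiI t).deriv, ht'] at hφ'
    norm_num at hφ'
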